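/- Let B and M be real symmetric positive definite n×n matrices, let f(X) = log det X + trace(M X⁻¹) for symmetric positive definite X, and let B' = G(B,M) = B^{1/2} (B^{-1/2} M B^{-1/2})^{1/2} B^{1/2} be the geometric mean of B and M. Then f(B') ≤ f(B); i.e., one step of the geometric-mean update rule does not increase the temporal Type-II cost. -/

import Mathlib

open Matrix

/-- The unique symmetric positive semidefinite square root of a positive
semidefinite real matrix (junk value `0` off the positive semidefinite cone). -/
noncomputable def msqrt {n : ℕ} (A : Matrix (Fin n) (Fin n) ℝ) :
    Matrix (Fin n) (Fin n) ℝ :=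
  letI := Classical.propDecidable A.PosSemidef
  if h : A.PosSemidef then
    (h.1.eigenvectorUnitary : Matrix (Fin n) (Fin n) ℝ) *
      diagonal (Real.sqrt ∘ h.1.eigenvalues) *
      (star h.1.eigenvectorUnitary : Matrix (Fin n) (Fin n) ℝ)
  else 0

/-- The geometric mean `G(A,M) = A^{1/2} (A^{-1/2} M A^{-1/2})^{1/2} A^{1/2}` of two
positive definite matrices; the midpoint of the geodesic joining them on the
positive definite manifold. -/
noncomputable def geomMean {n : ℕ} (A M : Matrix (Fin n) (Fin n) ℝ) :
    Matrix (Fin n) (Fin n) ℝ :=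
  msqrt A * msqrt (msqrt A⁻¹ * M * msqrt A⁻¹) * msqrt A

/-!
Congruence by `S = B^{1/2}` separates the cost: `f_M(S X S) = log det B + f_C(X)` with
`C = S⁻¹ M S⁻¹`. It sends `B` to `1` and `G(B, M)` to `R = C^{1/2}`, so with `M` replaced by
`C = R²` the claim becomes `f(R) ≤ f(1)`, i.e. `log det R + tr R ≤ tr R²`. This follows from
`log det R ≤ tr R - n` (that is, `log λ ≤ λ - 1` on the eigenvalues) and `tr (R - 1)² ≥ 0`.
-/

open scoped MatrixOrder

section Sqrt

variable {n : ℕ}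

lemma msqrt_eq_cfcSqrt (A : Matrix (Fin n) (Fin n) ℝ) : msqrt A = CFC.sqrt A := by
  by_cases hA : A.PosSemidef
  · rw [msqrt, dif_pos hA, CFC.sqrt_eq_cfc, cfc_nnreal_eq_real _ A, hA.1.cfc_eq]
    simp only [IsHermitian.cfc, Unitary.conjStarAlgAut_apply]
    congr 3
    funext i
    simp [hA.eigenvalues_nonneg i]
  · rw [msqrt, dif_neg hA, CFC.sqrt_of_not_nonneg (by rwa [nonneg_iff_posSemidef])]

lemma msqrt_inv (A : Matrix (Fin n) (Fin n) ℝ) : msqrt A⁻¹ = (msqrt A)⁻¹ := by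
  simp only [msqrt_eq_cfcSqrt, nonsing_inv_eq_ringInverse, CFC.sqrt_ringInverse]

lemma msqrt_mul_msqrt_self {A : Matrix (Fin n) (Fin n) ℝ} (hA : A.PosSemidef) :
    msqrt A * msqrt A = A :=
  msqrt_eq_cfcSqrt A ▸ CFC.sqrt_mul_sqrt_self A hA.nonneg

lemma Matrix.PosDef.msqrt {A : Matrix (Fin n) (Fin n) ℝ} (hA : A.PosDef) :
    (msqrt A).PosDef := by
  have := hA.isStrictlyPositive
  exact msqrt_eq_cfcSqrt A ▸ (IsStrictlyPositive.sqrt A).posDef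

end Sqrt

section Cost

variable {ι : Type*} [Fintype ι] [DecidableEq ι]

noncomputable def typeIICost (M X : Matrix ι ι ℝ) : ℝ :=
  Real.log X.det + (M * X⁻¹).trace

lemma typeIICost_mul_mul_self (M : Matrix ι ι ℝ) {S X : Matrix ι ι ℝ} (hS : S.det ≠ 0)
    (hX : X.det ≠ 0) :
    typeIICost M (S * X * S) = Real.log (S * S).det + typeIICost (S⁻¹ * M * S⁻¹) X := by
  have hlog : Real.log (S * X * S).det = Real.log (S * S).det + Real.log X.det := by
    rw [det_mul, det_mul, det_mul, mul_right_comm, Real.log_mul (mul_ne_zero hS hS) hX]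
  have htrace : (M * (S * X * S)⁻¹).trace = (S⁻¹ * M * S⁻¹ * X⁻¹).trace := by
    rw [Matrix.mul_inv_rev, Matrix.mul_inv_rev, ← mul_assoc, ← mul_assoc, trace_mul_cycle,
      ← mul_assoc]
  rw [typeIICost, typeIICost, hlog, htrace, add_assoc]

lemma Matrix.PosDef.log_det_le_trace_sub_card {R : Matrix ι ι ℝ} (hR : R.PosDef) :
    Real.log R.det ≤ R.trace - Fintype.card ι := by
  have hev := hR.eigenvalues_pos
  rw [hR.1.det_eq_prod_eigenvalues, hR.1.trace_eq_sum_eigenvalues]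
  simp only [Real.ringHom_apply]
  rw [Real.log_prod fun i _ => (hev i).ne']
  calc ∑ i, Real.log (hR.1.eigenvalues i) ≤ ∑ i, (hR.1.eigenvalues i - 1) :=
        Finset.sum_le_sum fun i _ => Real.log_le_sub_one_of_pos (hev i)
    _ = ∑ i, hR.1.eigenvalues i - Fintype.card ι := by simp [Finset.sum_sub_distrib]

lemma Matrix.IsHermitian.two_mul_trace_sub_card_le_trace_mul_self {R : Matrix ι ι ℝ}
    (hR : R.IsHermitian) : 2 * R.trace - Fintype.card ι ≤ (R * R).trace := by
  have hsq : 0 ≤ ((R - 1)ᴴ * (R - 1)).trace :=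
    (posSemidef_conjTranspose_mul_self _).trace_nonneg
  rw [conjTranspose_sub, hR.eq, conjTranspose_one] at hsq
  have hexpand : (R - 1) * (R - 1) = R * R - 2 • R + 1 := by noncomm_ring
  rw [hexpand, trace_add, trace_sub, trace_smul, trace_one] at hsq
  simp only [nsmul_eq_mul, Nat.cast_ofNat] at hsq
  linarith

lemma Matrix.PosDef.typeIICost_mul_self_le_at_one {R : Matrix ι ι ℝ} (hR : R.PosDef) :
    typeIICost (R * R) R ≤ typeIICost (R * R) 1 := by
  have hRR : R * R * R⁻¹ = R := by
    rw [mul_assoc, mul_nonsing_inv _ hR.det_pos.ne'.isUnit, mul_one]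
  rw [typeIICost, typeIICost, hRR, det_one, Real.log_one, inv_one, mul_one, zero_add]
  linarith [hR.log_det_le_trace_sub_card, hR.1.two_mul_trace_sub_card_le_trace_mul_self]

end Cost

/-- Descent property of one geometric-mean update step for the temporal Type-II
cost `f(X) = log det X + tr(M X⁻¹)`: with `B' = G(B, M)` one has `f(B') ≤ f(B)`. -/
theorem stmt_7 {n : ℕ} (B M : Matrix (Fin n) (Fin n) ℝ)
    (hB : B.PosDef) (hM : M.PosDef) :
    Real.log (geomMean B M).det + (M * (geomMean B M)⁻¹).trace ≤
      Real.log B.det + (M * B⁻¹).trace := by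
  set S := msqrt B
  set R := msqrt (S⁻¹ * M * S⁻¹)
  have hS : S.PosDef := hB.msqrt
  have hC : (S⁻¹ * M * S⁻¹).PosDef := by
    simpa only [hS.inv.1.eq] using
      hM.conjTranspose_mul_mul_same (mulVec_injective_iff_isUnit.mpr hS.inv.isUnit)
  have hR : R.PosDef := hC.msqrt
  change typeIICost M (geomMean B M) ≤ typeIICost M B
  calc typeIICost M (geomMean B M) = typeIICost M (S * R * S) := by rw [geomMean, msqrt_inv]
    _ = Real.log (S * S).det + typeIICost (R * R) R := by
      rw [typeIICost_mul_mul_self M hS.det_pos.ne' hR.det_pos.ne',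
        msqrt_mul_msqrt_self hC.posSemidef]
    _ ≤ Real.log (S * S).det + typeIICost (R * R) 1 := by grw [hR.typeIICost_mul_self_le_at_one]
    _ = typeIICost M (S * 1 * S) := by
      rw [typeIICost_mul_mul_self M hS.det_pos.ne' (by simp),
        msqrt_mul_msqrt_self hC.posSemidef]
    _ = typeIICost M B := by rw [mul_one, msqrt_mul_msqrt_self hB.posSemidef]
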